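/- The statistic T = n + m, where n ~ Binomial(N, θ) and m ~ Binomial(M, cθ) are independent (c > 0 a known constant with cθ ≤ 1 for all θ in the parameter range), is a complete statistic: if g is any function with E_θ[g(n+m)] = 0 for all θ in an open interval, then g(n+m) = 0 almost surely for all θ. -/
import Mathlib


open Finset

/-- Completeness of the statistic `T = n + m` for independent `n ~ Binomial(N, θ)` and
`m ~ Binomial(M, c·θ)`: if a function `g` satisfies `E_θ[g(n+m)] = 0` for every `θ` in a
nonempty open interval `(a,b) ⊆ (0, 1/max(1,c))`, then `g k = 0` for every value
`k = 0,…,N+M` (all of which have positive probability). -/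
theorem sum_of_binomials_complete
    (N M : ℕ) (hN : 0 < N) (hM : 0 < M) (c : ℝ) (hc : 0 < c)
    (a b : ℝ) (hab : a < b) (ha : 0 < a) (hb : b ≤ 1 / max 1 c)
    (g : ℕ → ℝ)
    (hzero : ∀ θ ∈ Set.Ioo a b,
      ∑ n ∈ range (N + 1), ∑ m ∈ range (M + 1),
        ((N.choose n : ℝ) * θ ^ n * (1 - θ) ^ (N - n)) *
        ((M.choose m : ℝ) * (c * θ) ^ m * (1 - c * θ) ^ (M - m)) * g (n + m) = 0) :
    ∀ k ≤ N + M, g k = 0 := by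
  classical
  set P : Polynomial ℝ := ∑ n ∈ range (N + 1), ∑ m ∈ range (M + 1),
      Polynomial.C ((N.choose n : ℝ) * (M.choose m : ℝ) * c ^ m * g (n + m)) *
        (Polynomial.X ^ (n + m) *
          ((1 - Polynomial.X) ^ (N - n) *
            (1 - Polynomial.C c * Polynomial.X) ^ (M - m))) with hP
  have hPeval : ∀ θ ∈ Set.Ioo a b, P.eval θ = 0 := by
    intro θ hθ
    rw [hP]
    simp only [Polynomial.eval_finset_sum, Polynomial.eval_mul, Polynomial.eval_pow,
      Polynomial.eval_sub, Polynomial.eval_one, Polynomial.eval_X, Polynomial.eval_C]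
    rw [← hzero θ hθ]
    refine Finset.sum_congr rfl fun n _ => Finset.sum_congr rfl fun m _ => ?_
    ring
  have hP0 : P = 0 := by
    apply Polynomial.eq_zero_of_infinite_isRoot
    exact (Set.Ioo_infinite hab).mono (fun x hx => hPeval x hx)
  intro k
  induction k using Nat.strong_induction_on with
  | _ k ih =>
  intro hk
  have h0 : P.coeff k = 0 := by rw [hP0]; simp
  rw [hP] at h0
  simp only [Polynomial.finset_sum_coeff, Polynomial.coeff_C_mul] at h0
  have hcoeff : ∀ n m : ℕ, (Polynomial.X ^ (n + m) *
      ((1 - Polynomial.X) ^ (N - n) *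
        (1 - Polynomial.C c * Polynomial.X) ^ (M - m)) : Polynomial ℝ).coeff k =
      if n + m ≤ k then ((1 - Polynomial.X) ^ (N - n) *
        (1 - Polynomial.C c * Polynomial.X) ^ (M - m) : Polynomial ℝ).coeff (k - (n + m))
      else 0 := by
    intro n m
    rw [mul_comm, Polynomial.coeff_mul_X_pow']
  have hone : ∀ n m : ℕ, ((1 - Polynomial.X) ^ (N - n) *
      (1 - Polynomial.C c * Polynomial.X) ^ (M - m) : Polynomial ℝ).coeff 0 = 1 := by
    intro n m
    rw [Polynomial.coeff_zero_eq_eval_zero]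
    simp
  have h1 : ∑ n ∈ range (N + 1), ∑ m ∈ range (M + 1),
      (if n + m = k then (N.choose n : ℝ) * (M.choose m : ℝ) * c ^ m * g k else 0) = 0 := by
    refine Eq.trans ?_ h0
    refine Finset.sum_congr rfl fun n hn => Finset.sum_congr rfl fun m hm => ?_
    simp only [Finset.mem_range, Nat.lt_succ_iff] at hn hm
    rw [hcoeff n m]
    rcases lt_trichotomy (n + m) k with h | h | h
    · rw [ih (n + m) h (by omega), if_neg h.ne, if_pos h.le, mul_zero, zero_mul]
    · rw [if_pos h, if_pos h.le, h, Nat.sub_self, hone, mul_one]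
    · rw [if_neg (by omega), if_neg (by omega : ¬ n + m ≤ k), mul_zero]
  have h2 : (∑ n ∈ range (N + 1), ∑ m ∈ range (M + 1),
      (if n + m = k then (N.choose n : ℝ) * (M.choose m : ℝ) * c ^ m else 0)) * g k = 0 := by
    refine Eq.trans ?_ h1
    rw [Finset.sum_mul]
    refine Finset.sum_congr rfl fun n _ => ?_
    rw [Finset.sum_mul]
    refine Finset.sum_congr rfl fun m _ => ?_
    split_ifs <;> ring
  have hSpos : 0 < ∑ n ∈ range (N + 1), ∑ m ∈ range (M + 1),
      (if n + m = k then (N.choose n : ℝ) * (M.choose m : ℝ) * c ^ m else 0) := by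
    have hn0 : min k N ∈ range (N + 1) := by simp [Nat.lt_succ_iff]
    have hm0 : k - min k N ∈ range (M + 1) := by
      simp only [Finset.mem_range, Nat.lt_succ_iff]; omega
    refine Finset.sum_pos' (fun n _ => Finset.sum_nonneg fun m _ => ?_) ⟨min k N, hn0, ?_⟩
    · split_ifs
      · positivity
      · exact le_rfl
    · refine Finset.sum_pos' (fun m _ => ?_) ⟨k - min k N, hm0, ?_⟩
      · split_ifs
        · positivity
        · exact le_rfl
      · rw [if_pos (by omega)]
        have hch1 : (0:ℝ) < N.choose (min k N) := by
          exact_mod_cast Nat.choose_pos (by omega)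
        have hch2 : (0:ℝ) < M.choose (k - min k N) := by
          exact_mod_cast Nat.choose_pos (by omega)
        positivity
  rcases mul_eq_zero.mp h2 with h | h
  · exact absurd h hSpos.ne'
  · exact h
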